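/- Let K ⊆ ℝᵈ be closed convex, H differentiable and convex, G ∈ ℝᵈ, λ, η > 0, z̃ ∈ K, and let ẑ = argmin_{z∈K}{ ⟨G, z⟩ + (1/λ)H(z) + (1/η)D(z|z̃) } where D is the Bregman divergence of H. Then for every z ∈ K: η⟨G, ẑ − z⟩ + (η/λ)(H(ẑ) − H(z)) ≤ D(z|z̃) − D(ẑ|z̃) − ((λ+η)/λ)·D(z|ẑ). -/

import Mathlib

/-!
Minimality of `zh` over the convex set `K` gives the first-order condition
`0 ≤ ⟪G + (1/λ + 1/η) ∇H(zh) - (1/η) ∇H(zt), z - zh⟫`. Multiplying by `η`, the three-point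
identity `D(z|zt) - D(zh|zt) - D(z|zh) = ⟪∇H(zh) - ∇H(zt), z - zh⟫` and the definition of
`D(z|zh)` turn it into the claimed inequality: the right side minus the left side is exactly
`η` times the first-order slack.
-/

open RealInnerProductSpace

variable {E : Type*} [NormedAddCommGroup E] [InnerProductSpace ℝ E]

def bregmanDiv (H : E → ℝ) (H' : E → E) (z z' : E) : ℝ :=
  H z - H z' - ⟪H' z', z - z'⟫

theorem bregmanDiv_three_point (H : E → ℝ) (H' : E → E) (x y z : E) :
    bregmanDiv H H' z x - bregmanDiv H H' y x - bregmanDiv H H' z y = ⟪H' y - H' x, z - y⟫ := by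
  have hsplit : z - x = (z - y) + (y - x) := by abel
  simp only [bregmanDiv, hsplit, inner_add_right, inner_sub_left]
  ring

theorem Convex.inner_gradient_nonneg_of_isMinOn [CompleteSpace E] {K : Set E} (hK : Convex ℝ K)
    {f : E → ℝ} {g a b : E} (hf : HasGradientAt f g a) (ha : a ∈ K) (hmin : IsMinOn f K a) (hb : b ∈ K) :
    0 ≤ ⟪g, b - a⟫ := by
  simpa using hmin.localize.hasFDerivWithinAt_nonneg hf.hasFDerivAt.hasFDerivWithinAt
    (sub_mem_posTangentConeAt_of_segment_subset (hK.segment_subset ha hb))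

theorem hasGradientAt_inner_add_mul_add_mul_bregmanDiv [CompleteSpace E] {H : E → ℝ}
    {H' : E → E} {x : E} (hH : HasGradientAt H (H' x) x) (G y : E) (a b : ℝ) :
    HasGradientAt (fun z ↦ ⟪G, z⟫ + a * H z + b * bregmanDiv H H' z y)
      (G + a • H' x + b • (H' x - H' y)) x := by
  have hexpand : (fun z ↦ ⟪G, z⟫ + a * H z + b * bregmanDiv H H' z y) =
      fun z ↦ ⟪G, z⟫ + a * H z + b * ((H z - H y) - (⟪H' y, z⟫ - ⟪H' y, y⟫)) := by
    simp only [bregmanDiv, inner_sub_right]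
  rw [hexpand, hasGradientAt_iff_hasFDerivAt]
  rw [hasGradientAt_iff_hasFDerivAt] at hH
  have hlin (v : E) : HasFDerivAt (fun z : E ↦ ⟪v, z⟫) (innerSL ℝ v) x := (innerSL ℝ v).hasFDerivAt
  refine (((hlin G).add (hH.const_mul a)).add
    (((hH.sub_const (H y)).sub ((hlin (H' y)).sub_const ⟪H' y, y⟫)).const_mul b)).congr_fderiv ?_
  ext v
  simp

theorem stmt_11_general (d : ℕ) (K : Set (EuclideanSpace ℝ (Fin d)))
    (hK : Convex ℝ K)
    (H : EuclideanSpace ℝ (Fin d) → ℝ) (H' : EuclideanSpace ℝ (Fin d) → EuclideanSpace ℝ (Fin d))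
    (hdiff : ∀ x, HasGradientAt H (H' x) x)
    (G : EuclideanSpace ℝ (Fin d)) (zt : EuclideanSpace ℝ (Fin d))
    (l η : ℝ) (hl : 0 < l) (hη : 0 < η)
    (D : EuclideanSpace ℝ (Fin d) → EuclideanSpace ℝ (Fin d) → ℝ)
    (hD : ∀ z z', D z z' = H z - H z' - ⟪H' z', z - z'⟫)
    (zh : EuclideanSpace ℝ (Fin d)) (hzhK : zh ∈ K)
    (hzh : ∀ z ∈ K, ⟪G, zh⟫ + (1 / l) * H zh + (1 / η) * D zh zt ≤
                   ⟪G, z⟫ + (1 / l) * H z + (1 / η) * D z zt) :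
    ∀ z ∈ K, η * ⟪G, zh - z⟫ + (η / l) * (H zh - H z) ≤
      D z zt - D zh zt - ((l + η) / l) * D z zh := by
  intro z hz
  obtain rfl : D = bregmanDiv H H' := funext₂ hD
  have hvi := hK.inner_gradient_nonneg_of_isMinOn
    (hasGradientAt_inner_add_mul_add_mul_bregmanDiv (hdiff zh) G zt _ _)
    hzhK (isMinOn_iff.2 hzh) hz
  simp only [inner_add_left, real_inner_smul_left] at hvi
  have hD_zh : bregmanDiv H H' z zh = H z - H zh - ⟪H' zh, z - zh⟫ := rfl
  have hslack : bregmanDiv H H' z zt - bregmanDiv H H' zh zt - ((l + η) / l) * bregmanDiv H H' z zh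
      - (η * ⟪G, zh - z⟫ + (η / l) * (H zh - H z)) =
      η * (⟪G, z - zh⟫ + 1 / l * ⟪H' zh, z - zh⟫ + 1 / η * ⟪H' zh - H' zt, z - zh⟫) := by
    rw [← bregmanDiv_three_point H H' zt zh z, ← neg_sub z zh, inner_neg_right]
    field_simp
    rw [hD_zh]
    ring
  linarith [mul_nonneg hη.le hvi]

/-- One-step composite mirror-descent inequality: if `zh` minimizes
`⟨G, z⟩ + (1/λ)H(z) + (1/η)D(z|zt)` over `K`, then for every `z ∈ K`,
`η⟨G, zh - z⟩ + (η/λ)(H(zh) - H(z)) ≤ D(z|zt) - D(zh|zt) - ((λ+η)/λ)D(z|zh)`. -/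
theorem stmt_11 (d : ℕ) (K : Set (EuclideanSpace ℝ (Fin d)))
    (hKc : IsClosed K) (hK : Convex ℝ K)
    (H : EuclideanSpace ℝ (Fin d) → ℝ) (H' : EuclideanSpace ℝ (Fin d) → EuclideanSpace ℝ (Fin d))
    (hdiff : ∀ x, HasGradientAt H (H' x) x)
    (hconv : ConvexOn ℝ K H)
    (G : EuclideanSpace ℝ (Fin d)) (zt : EuclideanSpace ℝ (Fin d)) (hzt : zt ∈ K)
    (l η : ℝ) (hl : 0 < l) (hη : 0 < η)
    (D : EuclideanSpace ℝ (Fin d) → EuclideanSpace ℝ (Fin d) → ℝ)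
    (hD : ∀ z z', D z z' = H z - H z' - ⟪H' z', z - z'⟫)
    (zh : EuclideanSpace ℝ (Fin d)) (hzhK : zh ∈ K)
    (hzh : ∀ z ∈ K, ⟪G, zh⟫ + (1 / l) * H zh + (1 / η) * D zh zt ≤
                   ⟪G, z⟫ + (1 / l) * H z + (1 / η) * D z zt) :
    ∀ z ∈ K, η * ⟪G, zh - z⟫ + (η / l) * (H zh - H z) ≤
      D z zt - D zh zt - ((l + η) / l) * D z zh :=
  stmt_11_general d K hK H H' hdiff G zt l η hl hη D hD zh hzhK hzh
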